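/- arXiv:1107.3584 — 2 statements merged into one kernel-verified Lean document; each statement's English description precedes it below -/
import Mathlib

section
/- (Proposition 3, dynamical form.) Let N ≥ 1, let f₁,…,f_N ∈ ℝ[x_1,…,x_N] be multivariate polynomials (f : Fin N → MvPolynomial (Fin N) ℝ), let I = Ideal.span {f i : i ∈ Fin N} and let J = Ideal.span {X i - X j : i, j ∈ Fin N} (equivalently, the ideal generated by x_1 - x_2, x_2 - x_3, …, x_{N-1} - x_N). Suppose there is a solution x : ℝ → (Fin N → ℝ) of the polynomial dynamical system ẋ_i = f_i(x), i.e., for every t and every i the function t ↦ x t i has derivative (MvPolynomial.eval (x t)) (f i) at t, and suppose the system attains consensus: there exists α : ℝ with x t → (fun _ => α) as t → +∞. Then the affine variety of I + J is nonempty — there exists p : Fin N → ℝ with (MvPolynomial.eval p) g = 0 for every g ∈ I ⊔ J — and I ⊔ J is a proper ideal of ℝ[x_1,…,x_N] (I ⊔ J ≠ ⊤). -/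
/-!
Along a trajectory converging to `p`, the velocity `f (x t)` converges to `f p`; a convergent
function whose derivative has a limit must have limit derivative `0`, so `p` is an equilibrium.
A consensus value `p = (α, …, α)` also kills every `xᵢ - xⱼ`, so evaluation at `p` annihilates
`I ⊔ J`, which is therefore contained in a proper (maximal) ideal.
-/

open Filter MvPolynomial Topology

lemma eq_zero_of_tendsto_of_tendsto_deriv {g g' : ℝ → ℝ}
    (hd : ∀ t, HasDerivAt g (g' t) t) {α c : ℝ}
    (hg : Tendsto g atTop (𝓝 α)) (hg' : Tendsto g' atTop (𝓝 c)) : c = 0 := by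
  -- mean value theorem on `[t, t + 1]`: some `ξ t > t` has `g' (ξ t) = g (t + 1) - g t → 0`
  have hmvt : ∀ t : ℝ, ∃ ξ ∈ Set.Ioo t (t + 1), g' ξ = (g (t + 1) - g t) / ((t + 1) - t) :=
    fun t => exists_hasDerivAt_eq_slope g g' (by linarith)
      (fun s _ => (hd s).continuousAt.continuousWithinAt) (fun s _ => hd s)
  choose ξ hξ hslope using hmvt
  have hξ_atTop : Tendsto ξ atTop atTop :=
    tendsto_atTop_mono (fun t => (hξ t).1.le) tendsto_id
  have hincr : Tendsto (fun t => g (t + 1) - g t) atTop (𝓝 0) := by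
    simpa using (hg.comp (tendsto_atTop_add_const_right atTop 1 tendsto_id)).sub hg
  have hslope' : ∀ t, g (t + 1) - g t = g' (ξ t) := fun t => by
    rw [hslope t, add_sub_cancel_left, div_one]
  exact tendsto_nhds_unique (hg'.comp hξ_atTop) (hincr.congr hslope')

lemma eval_eq_zero_of_hasDerivAt_of_tendsto {σ : Type*} {f : σ → MvPolynomial σ ℝ}
    {x : ℝ → σ → ℝ} (hx : ∀ t i, HasDerivAt (fun s => x s i) (eval (x t) (f i)) t)
    {p : σ → ℝ} (hp : Tendsto x atTop (𝓝 p)) (i : σ) : eval p (f i) = 0 :=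
  eq_zero_of_tendsto_of_tendsto_deriv (hx · i) ((continuous_apply i).tendsto p |>.comp hp)
    ((continuous_eval (f i)).tendsto p |>.comp hp)

lemma span_X_sub_X_le_ker_eval_const {σ R : Type*} [CommRing R] (α : R) :
    Ideal.span {g | ∃ i j : σ, g = X i - X j} ≤ RingHom.ker (eval fun _ : σ => α) := by
  rw [Ideal.span_le]
  rintro _ ⟨i, j, rfl⟩
  simp

theorem consensus_implies_variety_of_sum_nonempty_general
    (N : ℕ)
    (f : Fin N → MvPolynomial (Fin N) ℝ)
    (I : Ideal (MvPolynomial (Fin N) ℝ)) (hI : I = Ideal.span (Set.range f))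
    (J : Ideal (MvPolynomial (Fin N) ℝ))
    (hJ : J = Ideal.span {g | ∃ i j : Fin N, g = X i - X j})
    (x : ℝ → (Fin N → ℝ))
    (hx : ∀ (t : ℝ) (i : Fin N),
      HasDerivAt (fun s => x s i) (MvPolynomial.eval (x t) (f i)) t)
    (hcons : ∃ α : ℝ, Tendsto x atTop (nhds (fun _ => α))) :
    (∃ p : Fin N → ℝ, ∀ g ∈ I ⊔ J, MvPolynomial.eval p g = 0) ∧ I ⊔ J ≠ ⊤ := by
  obtain ⟨α, hα⟩ := hcons
  have hker : I ⊔ J ≤ RingHom.ker (eval fun _ : Fin N => α) := by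
    subst hI hJ
    refine sup_le (Ideal.span_le.2 ?_) (span_X_sub_X_le_ker_eval_const α)
    rintro _ ⟨i, rfl⟩
    exact eval_eq_zero_of_hasDerivAt_of_tendsto hx hα i
  exact ⟨⟨_, fun g hg => hker hg⟩, ne_top_of_le_ne_top (RingHom.ker_ne_top _) hker⟩

theorem consensus_implies_variety_of_sum_nonempty
    (N : ℕ) (hN : 1 ≤ N)
    (f : Fin N → MvPolynomial (Fin N) ℝ)
    (I : Ideal (MvPolynomial (Fin N) ℝ)) (hI : I = Ideal.span (Set.range f))
    (J : Ideal (MvPolynomial (Fin N) ℝ))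
    (hJ : J = Ideal.span {g | ∃ i j : Fin N, g = X i - X j})
    (x : ℝ → (Fin N → ℝ))
    (hx : ∀ (t : ℝ) (i : Fin N),
      HasDerivAt (fun s => x s i) (MvPolynomial.eval (x t) (f i)) t)
    (hcons : ∃ α : ℝ, Tendsto x atTop (nhds (fun _ => α))) :
    (∃ p : Fin N → ℝ, ∀ g ∈ I ⊔ J, MvPolynomial.eval p g = 0) ∧ I ⊔ J ≠ ⊤ :=
  consensus_implies_variety_of_sum_nonempty_general N f I hI J hJ x hx hcons
end

section
/- (Proposition 5, part 2.) Let V be a finite nonempty type and E : V → V → Prop a directed graph. Write Reach for the reflexive-transitive closure of E, define i ≺_p j to mean Reach j i, say i ∼_p j if i ≺_p j and j ≺_p i, and call a vertex j maximal if for every i, j ≺_p i implies i ≺_p j. Then the following are equivalent: (1) the graph has a directed spanning tree, i.e., there exists a root vertex r such that Reach r i holds for every i ∈ V; (2) the set of maximal elements of V under ≺_p forms exactly one equivalence class under ∼_p, i.e., it is nonempty and any two maximal vertices are path-equivalent (the quotient Maximal_{≺_p} V / ∼_p has cardinality 1). -/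
/-!
Reachability is a preorder, and on a finite vertex set every vertex is reached from some
maximal vertex (the strict part of the preorder is well founded). A root reaches every
vertex, so it is maximal, and every maximal vertex, being reached from the root, reaches
the root back; hence all maximal vertices form one class. Conversely, if the maximal
vertices form a single class containing `j`, then `j` reaches the maximal vertex above any
given vertex, and so reaches every vertex.
-/

open Relation

theorem Finite.exists_minimal_rel_of_isPreorder {α : Type*} [Finite α] (r : α → α → Prop)
    [IsPreorder α r] (a : α) : ∃ m, r m a ∧ ∀ x, r x m → r m x := by
  let lt : α → α → Prop := fun x y => r x y ∧ ¬ r y x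
  have : IsTrans α lt := ⟨fun _ _ _ ⟨hxy, hyx⟩ ⟨hyz, _⟩ =>
    ⟨_root_.trans hxy hyz, fun hzx => hyx (_root_.trans hyz hzx)⟩⟩
  have : Std.Irrefl lt := ⟨fun _ ⟨hxx, hnxx⟩ => hnxx hxx⟩
  obtain ⟨m, hma, hmin⟩ :=
    (Finite.wellFounded_of_trans_of_irrefl lt).has_min {x | r x a} ⟨a, refl a⟩
  exact ⟨m, hma, fun x hxm => by_contra fun hmx => hmin x (_root_.trans hxm hma) ⟨hxm, hmx⟩⟩

section

variable {V : Type*} (E : V → V → Prop)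

/-- Maximality for the order `≺_p`, where `i ≺_p j` means `ReflTransGen E j i`. -/
def IsMaximalVertex (j : V) : Prop :=
  ∀ i, ReflTransGen E i j → ReflTransGen E j i

variable {E}

theorem exists_isMaximalVertex_reflTransGen [Finite V] (a : V) :
    ∃ m, IsMaximalVertex E m ∧ ReflTransGen E m a := by
  obtain ⟨m, hma, hm⟩ := Finite.exists_minimal_rel_of_isPreorder (ReflTransGen E) a
  exact ⟨m, hm, hma⟩

theorem isMaximalVertex_of_forall_reflTransGen {r : V} (hr : ∀ i, ReflTransGen E r i) :
    IsMaximalVertex E r :=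
  fun i _ => hr i

theorem IsMaximalVertex.reflTransGen_of_root {r j : V} (hj : IsMaximalVertex E j)
    (hr : ∀ i, ReflTransGen E r i) (k : V) : ReflTransGen E j k :=
  (hj r (hr j)).trans (hr k)

end

theorem directed_spanning_tree_iff_one_maximal_class_general
    (V : Type*) [Finite V] (E : V → V → Prop) :
    (∃ r : V, ∀ i : V, Relation.ReflTransGen E r i) ↔
      ((∃ j : V, ∀ i : V, Relation.ReflTransGen E i j → Relation.ReflTransGen E j i) ∧
        ∀ j j' : V,
          (∀ i : V, Relation.ReflTransGen E i j → Relation.ReflTransGen E j i) →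
          (∀ i : V, Relation.ReflTransGen E i j' → Relation.ReflTransGen E j' i) →
          Relation.ReflTransGen E j j' ∧ Relation.ReflTransGen E j' j) := by
  constructor
  · rintro ⟨r, hr⟩
    refine ⟨⟨r, isMaximalVertex_of_forall_reflTransGen hr⟩, fun j j' hj hj' => ⟨?_, ?_⟩⟩
    · exact IsMaximalVertex.reflTransGen_of_root hj hr j'
    · exact IsMaximalVertex.reflTransGen_of_root hj' hr j
  · rintro ⟨⟨j, hj⟩, hunique⟩
    refine ⟨j, fun i => ?_⟩
    obtain ⟨m, hm, hmi⟩ := exists_isMaximalVertex_reflTransGen (E := E) i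
    exact (hunique j m hj hm).1.trans hmi

theorem directed_spanning_tree_iff_one_maximal_class
    (V : Type*) [Finite V] [Nonempty V] (E : V → V → Prop) :
    (∃ r : V, ∀ i : V, Relation.ReflTransGen E r i) ↔
      ((∃ j : V, ∀ i : V, Relation.ReflTransGen E i j → Relation.ReflTransGen E j i) ∧
        ∀ j j' : V,
          (∀ i : V, Relation.ReflTransGen E i j → Relation.ReflTransGen E j i) →
          (∀ i : V, Relation.ReflTransGen E i j' → Relation.ReflTransGen E j' i) →
          Relation.ReflTransGen E j j' ∧ Relation.ReflTransGen E j' j) :=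
  directed_spanning_tree_iff_one_maximal_class_general V E
end
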